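/- arXiv:2604.23395 — 5 statements merged into one kernel-verified Lean document; each statement's English description precedes it below -/
import Mathlib

section
/- Let n ≥ 2 and let R be the quotient of ℚ[X_0, …, X_{n−1}] by the ideal generated by X_i² for all i, with x_i the class of X_i. Then in R one has the identity (x_1 − x_0)² · (x_2 − x_0) · ⋯ · (x_{n−1} − x_0) = (−2) · x_0 · x_1 · ⋯ · x_{n−1}, and this element is nonzero. -/
open MvPolynomial

private lemma aux_mul_prod_sub {R : Type*} [CommRing R] {ι : Type*} [DecidableEq ι]
    (x : ι → R) (a : ι) (ha : x a ^ 2 = 0) (S : Finset ι) :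
    x a * ∏ i ∈ S, (x i - x a) = x a * ∏ i ∈ S, x i := by
  induction S using Finset.induction_on with
  | empty => simp
  | @insert b s hb ih =>
    rw [Finset.prod_insert hb, Finset.prod_insert hb]
    calc x a * ((x b - x a) * ∏ i ∈ s, (x i - x a))
        = x b * (x a * ∏ i ∈ s, (x i - x a)) - x a ^ 2 * ∏ i ∈ s, (x i - x a) := by ring
      _ = x b * (x a * ∏ i ∈ s, x i) := by rw [ha, ih]; ring
      _ = x a * (x b * ∏ i ∈ s, x i) := by ring

/-- In `R = ℚ[X_0, …, X_{n−1}] / (X_i²)` with classes `x_i`, one has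
`(x_1 − x_0)² · (x_2 − x_0) ⋯ (x_{n−1} − x_0) = (−2) · x_0 x_1 ⋯ x_{n−1}`,
and this element is nonzero. -/
theorem even_sphere_top_product (n : ℕ) (hn : 2 ≤ n)
    (I : Ideal (MvPolynomial (Fin n) ℚ))
    (hI : I = Ideal.span (Set.range fun i : Fin n => MvPolynomial.X i ^ 2)) :
    ((Ideal.Quotient.mk I (MvPolynomial.X ⟨1, by omega⟩)
        - Ideal.Quotient.mk I (MvPolynomial.X ⟨0, by omega⟩)) ^ 2 *
      ∏ i ∈ Finset.univ.filter (fun i : Fin n => 2 ≤ (i : ℕ)),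
        (Ideal.Quotient.mk I (MvPolynomial.X i)
          - Ideal.Quotient.mk I (MvPolynomial.X ⟨0, by omega⟩))
      = (-2 : MvPolynomial (Fin n) ℚ ⧸ I) *
          ∏ i : Fin n, Ideal.Quotient.mk I (MvPolynomial.X i)) ∧
    (-2 : MvPolynomial (Fin n) ℚ ⧸ I) *
        ∏ i : Fin n, Ideal.Quotient.mk I (MvPolynomial.X i) ≠ 0 := by
  set x : Fin n → MvPolynomial (Fin n) ℚ ⧸ I :=
    fun i => Ideal.Quotient.mk I (MvPolynomial.X i) with hx
  have hsq : ∀ i : Fin n, x i ^ 2 = 0 := by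
    intro i
    rw [hx, ← map_pow, Ideal.Quotient.eq_zero_iff_mem, hI]
    exact Ideal.subset_span ⟨i, rfl⟩
  have i0 : Fin n := ⟨0, by omega⟩
  have h01 : (⟨0, by omega⟩ : Fin n) ≠ ⟨1, by omega⟩ := by
    simp [Fin.ext_iff]
  constructor
  · -- the product identity
    have hfilter : (Finset.univ.filter (fun i : Fin n => ¬ 2 ≤ (i : ℕ)))
        = {(⟨0, by omega⟩ : Fin n), ⟨1, by omega⟩} := by
      ext i
      simp only [Finset.mem_filter, Finset.mem_univ, true_and, Finset.mem_insert,
        Finset.mem_singleton, Fin.ext_iff]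
      omega
    have hsplit : (∏ i : Fin n, x i)
        = (∏ i ∈ Finset.univ.filter (fun i : Fin n => 2 ≤ (i : ℕ)), x i) *
          (x ⟨0, by omega⟩ * x ⟨1, by omega⟩) := by
      rw [← Finset.prod_filter_mul_prod_filter_not Finset.univ (fun i : Fin n => 2 ≤ (i : ℕ)),
        hfilter, Finset.prod_pair h01]
    have hsq01 : (x ⟨1, by omega⟩ - x ⟨0, by omega⟩) ^ 2
        = -2 * (x ⟨0, by omega⟩ * x ⟨1, by omega⟩) := by
      have e : (x ⟨1, by omega⟩ - x ⟨0, by omega⟩) ^ 2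
          = x ⟨1, by omega⟩ ^ 2 - 2 * (x ⟨0, by omega⟩ * x ⟨1, by omega⟩)
            + x ⟨0, by omega⟩ ^ 2 := by ring
      rw [e, hsq, hsq]; ring
    show (x ⟨1, by omega⟩ - x ⟨0, by omega⟩) ^ 2 *
        ∏ i ∈ Finset.univ.filter (fun i : Fin n => 2 ≤ (i : ℕ)), (x i - x ⟨0, by omega⟩)
        = -2 * ∏ i : Fin n, x i
    rw [hsq01, hsplit]
    have key := aux_mul_prod_sub x ⟨0, by omega⟩ (hsq _)
      (Finset.univ.filter (fun i : Fin n => 2 ≤ (i : ℕ)))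
    calc -2 * (x ⟨0, by omega⟩ * x ⟨1, by omega⟩) *
          ∏ i ∈ Finset.univ.filter (fun i : Fin n => 2 ≤ (i : ℕ)), (x i - x ⟨0, by omega⟩)
        = -2 * x ⟨1, by omega⟩ * (x ⟨0, by omega⟩ *
          ∏ i ∈ Finset.univ.filter (fun i : Fin n => 2 ≤ (i : ℕ)), (x i - x ⟨0, by omega⟩)) := by
          ring
      _ = -2 * x ⟨1, by omega⟩ * (x ⟨0, by omega⟩ *
          ∏ i ∈ Finset.univ.filter (fun i : Fin n => 2 ≤ (i : ℕ)), x i) := by rw [key]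
      _ = -2 * ((∏ i ∈ Finset.univ.filter (fun i : Fin n => 2 ≤ (i : ℕ)), x i) *
          (x ⟨0, by omega⟩ * x ⟨1, by omega⟩)) := by ring
  · -- nonvanishing
    intro h
    -- push into the polynomial ring
    have hd : ∀ i : Fin n, i ∈ Finset.univ ↔ (fun _ : Fin n => (1:ℕ)) i ≠ 0 := by simp
    set d : Fin n →₀ ℕ := ⟨Finset.univ, fun _ => 1, hd⟩ with hdd
    have hdapp : ∀ i, d i = 1 := fun _ => rfl
    have hprod : (∏ i : Fin n, (MvPolynomial.X i : MvPolynomial (Fin n) ℚ))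
        = MvPolynomial.monomial d 1 := by
      rw [← prod_X_pow_eq_monomial]
      show _ = ∏ i ∈ d.support, X i ^ d i
      simp [hdapp, hdd]
    have hmem : ((-2 : MvPolynomial (Fin n) ℚ) * ∏ i : Fin n, MvPolynomial.X i) ∈ I := by
      rw [← Ideal.Quotient.eq_zero_iff_mem, map_mul, map_prod]
      simp only [map_neg, map_ofNat]
      exact h
    rw [hI] at hmem
    have hrange : (Set.range fun i : Fin n => (MvPolynomial.X i : MvPolynomial (Fin n) ℚ) ^ 2)
        = (fun s => MvPolynomial.monomial s (1:ℚ)) ''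
          Set.range (fun i : Fin n => Finsupp.single i 2) := by
      rw [← Set.range_comp]
      refine congrArg _ (funext fun i => ?_)
      simp [Function.comp, X_pow_eq_monomial]
    rw [hrange, mem_ideal_span_monomial_image] at hmem
    have hcoeff : (-2 : MvPolynomial (Fin n) ℚ) * ∏ i : Fin n, MvPolynomial.X i
        = MvPolynomial.monomial d (-2) := by
      rw [hprod]
      have : (-2 : MvPolynomial (Fin n) ℚ) = MvPolynomial.C (-2 : ℚ) := by
        rw [map_neg, map_ofNat]
      rw [this, C_mul_monomial, mul_one]
    rw [hcoeff] at hmem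
    have hds : d ∈ (MvPolynomial.monomial d (-2 : ℚ)).support := by
      rw [support_monomial]
      simp
    obtain ⟨si, ⟨i, rfl⟩, hle⟩ := hmem d hds
    have := hle i
    simp [Finsupp.single_apply, hdd] at this
end

section
/- Let n ≥ 2, let R be the quotient of ℚ[X_0, …, X_{n−1}] by the ideal generated by X_i² for all i, and let φ : R → ℚ[X]/(X²) be the ℚ-algebra homomorphism sending the class x_i of each X_i to the class of X. Then (ker φ)^n ≠ 0 and (ker φ)^{n+1} = 0; that is, nil(ker φ) = n. -/
/-!
The kernel lies in the augmentation ideal `(x_0, …, x_{n-1})`, whose `(n+1)`-st power vanishes: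
a monomial of degree `n + 1` in `n` variables repeats a variable, and `x_i ^ 2 = 0`.
Conversely, the `n` kernel elements `x_0 - x_1`, `x_1 - x_0` and `x_i - x_0` (`i ≥ 2`) multiply
to `2 x_0 ⋯ x_{n-1} ≠ 0`, because `x_0 (x_i - x_0) = x_0 x_i`.
-/

open MvPolynomial

section SquareZero

variable {R : Type*} [CommRing R]

theorem mul_prod_sub_eq_mul_prod_of_sq_eq_zero {ι : Type*} {a : R} (ha : a ^ 2 = 0)
    (s : Finset ι) (y : ι → R) : a * ∏ i ∈ s, (y i - a) = a * ∏ i ∈ s, y i := by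
  classical
  induction s using Finset.induction with
  | empty => rfl
  | insert j s hj ih =>
    rw [Finset.prod_insert hj, Finset.prod_insert hj]
    linear_combination (y j - a) * ih - (∏ i ∈ s, y i) * ha

theorem prod_sub_eq_two_mul_prod_of_sq_eq_zero {n : ℕ} (x : Fin (n + 2) → R)
    (hx : ∀ i, x i ^ 2 = 0) :
    (x 0 - x 1) * ∏ i : Fin (n + 1), (x i.succ - x 0) = 2 * ∏ i, x i := by
  rw [Fin.prod_univ_succ, Fin.prod_univ_succ x, Fin.prod_univ_succ, Fin.succ_zero_eq_one]
  have h := mul_prod_sub_eq_mul_prod_of_sq_eq_zero (hx 0) Finset.univ fun i : Fin n => x i.succ.succ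
  linear_combination 2 * x 1 * h - (∏ i : Fin n, (x i.succ.succ - x 0)) * hx 0
    - (∏ i : Fin n, (x i.succ.succ - x 0)) * hx 1

theorem two_mul_prod_mem_pow_of_sub_mem {n : ℕ} {K : Ideal R} (x : Fin (n + 2) → R)
    (hx : ∀ i, x i ^ 2 = 0) (hK : ∀ i j, x i - x j ∈ K) : 2 * ∏ i, x i ∈ K ^ (n + 2) := by
  rw [← prod_sub_eq_two_mul_prod_of_sq_eq_zero x hx, pow_succ']
  refine Ideal.mul_mem_mul (hK 0 1) ?_
  simpa using Ideal.prod_mem_prod (s := Finset.univ) fun (i : Fin (n + 1)) _ => hK i.succ 0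

end SquareZero

section SquaresOfVariables

variable {k σ : Type*} [CommRing k]

theorem mem_span_X_sq_iff {p : MvPolynomial σ k} :
    p ∈ Ideal.span (Set.range fun i => (X i : MvPolynomial σ k) ^ 2) ↔
      ∀ d ∈ p.support, ∃ i, 2 ≤ d i := by
  have hgen : (Set.range fun i => (X i : MvPolynomial σ k) ^ 2) =
      (monomial · 1) '' Set.range fun i => Finsupp.single i 2 := by
    rw [← Set.range_comp]
    simp [Function.comp_def, X_pow_eq_monomial]
  simp [hgen, mem_ideal_span_monomial_image, Finsupp.single_le_iff]

theorem prod_X_notMem_span_X_sq [Fintype σ] [Nontrivial k] :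
    ∏ i, X i ∉ Ideal.span (Set.range fun i => (X i : MvPolynomial σ k) ^ 2) := by
  classical
  rw [show ∏ i, (X i : MvPolynomial σ k) = monomial (∑ i, Finsupp.single i 1) 1 from
    (monomial_sum_one _ _).symm, mem_span_X_sq_iff]
  simp [support_monomial, Finsupp.finsetSum_apply, Finsupp.single_apply]

theorem pow_idealOfVars_card_succ_le_span_X_sq [Fintype σ] :
    idealOfVars σ k ^ (Fintype.card σ + 1) ≤
      Ideal.span (Set.range fun i => (X i : MvPolynomial σ k) ^ 2) := by
  rw [pow_idealOfVars_eq_span, Ideal.span_le]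
  rintro _ ⟨d, hd, rfl⟩
  have hrep : ∃ i, 2 ≤ d i := by
    by_contra! h
    have : d.degree ≤ Fintype.card σ := by
      rw [Finsupp.degree_eq_sum, Fintype.card_eq_sum_ones]
      exact Finset.sum_le_sum fun i _ => Nat.le_of_lt_succ (h i)
    simp only [Set.mem_preimage, Set.mem_singleton_iff] at hd
    omega
  refine mem_span_X_sq_iff.2 fun d' hd' => ?_
  rw [Finset.mem_singleton.1 (support_monomial_subset hd')]
  exact hrep

end SquaresOfVariables

theorem ker_le_map_idealOfVars {k σ : Type*} [CommRing k] (I : Ideal (MvPolynomial σ k))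
    (J : Ideal (Polynomial k)) (hJ : J ≤ Ideal.span {Polynomial.X})
    (φ : (MvPolynomial σ k ⧸ I) →ₐ[k] (Polynomial k ⧸ J))
    (hφ : ∀ i, φ (Ideal.Quotient.mk I (X i)) = Ideal.Quotient.mk J Polynomial.X) :
    RingHom.ker φ ≤ (idealOfVars σ k).map (Ideal.Quotient.mk I) := by
  -- `ε ∘ φ` is the augmentation `x_i ↦ 0`, so kernel elements lift to polynomials without
  -- constant term.
  let ε : (Polynomial k ⧸ J) →ₐ[k] k := Ideal.Quotient.liftₐ J (Polynomial.aeval 0) fun a ha => by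
    obtain ⟨b, rfl⟩ := Ideal.mem_span_singleton.1 (hJ ha)
    simp
  have hε : (ε.comp φ).comp (Ideal.Quotient.mkₐ k I) = aeval 0 :=
    algHom_ext fun i => by simp [ε, hφ]
  intro r hr
  obtain ⟨p, rfl⟩ := Ideal.Quotient.mk_surjective r
  refine Ideal.mem_map_of_mem _ ((pow_one (idealOfVars σ k)) ▸ (mem_pow_idealOfVars_iff' 1 p).2 ?_)
  intro d hd
  have h0 : aeval (0 : σ → k) p = 0 := by
    rw [← hε]
    simp [RingHom.mem_ker.1 hr]
  rw [Nat.lt_one_iff, Finsupp.degree_eq_zero_iff] at hd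
  simpa [hd, aeval_zero, constantCoeff_eq] using h0

/-- Let `R = ℚ[X_0, …, X_{n−1}] / (X_i²)` and let `φ : R → ℚ[X]/(X²)` be the
`ℚ`-algebra homomorphism sending each class `x_i` to the class of `X`. Then
`(ker φ)^n ≠ 0` and `(ker φ)^{n+1} = 0`, i.e. `nil(ker φ) = n`. -/
theorem nil_ker_mul_even_sphere (n : ℕ) (hn : 2 ≤ n)
    (I : Ideal (MvPolynomial (Fin n) ℚ))
    (hI : I = Ideal.span (Set.range fun i : Fin n => MvPolynomial.X i ^ 2))
    (J : Ideal (Polynomial ℚ))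
    (hJ : J = Ideal.span {Polynomial.X ^ 2})
    (φ : (MvPolynomial (Fin n) ℚ ⧸ I) →ₐ[ℚ] (Polynomial ℚ ⧸ J))
    (hφ : ∀ i : Fin n,
      φ (Ideal.Quotient.mk I (MvPolynomial.X i)) = Ideal.Quotient.mk J Polynomial.X) :
    (RingHom.ker φ) ^ n ≠ ⊥ ∧ (RingHom.ker φ) ^ (n + 1) = ⊥ := by
  obtain ⟨m, rfl⟩ : ∃ m, n = m + 2 := ⟨n - 2, by omega⟩
  set x : Fin (m + 2) → MvPolynomial (Fin (m + 2)) ℚ ⧸ I := fun i => Ideal.Quotient.mk I (X i)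
  have hx_sq : ∀ i, x i ^ 2 = 0 := fun i => by
    rw [← map_pow, Ideal.Quotient.eq_zero_iff_mem, hI]
    exact Ideal.subset_span ⟨i, rfl⟩
  have hx_ker : ∀ i j, x i - x j ∈ RingHom.ker φ := fun i j => by
    rw [RingHom.mem_ker, map_sub, hφ, hφ, sub_self]
  constructor
  · intro hbot
    have hmem := two_mul_prod_mem_pow_of_sub_mem x hx_sq hx_ker
    have h2 : IsUnit (2 : MvPolynomial (Fin (m + 2)) ℚ ⧸ I) := by
      simpa only [map_ofNat] using (isUnit_iff_ne_zero.2 two_ne_zero).map (algebraMap ℚ _)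
    rw [hbot, Ideal.mem_bot, h2.mul_right_eq_zero, ← map_prod, Ideal.Quotient.eq_zero_iff_mem,
      hI] at hmem
    exact prod_X_notMem_span_X_sq hmem
  · rw [← le_bot_iff]
    have hJX : J ≤ Ideal.span {Polynomial.X} := by
      rw [hJ, Ideal.span_singleton_le_span_singleton]
      exact dvd_pow_self _ two_ne_zero
    calc RingHom.ker φ ^ (m + 2 + 1)
        ≤ (idealOfVars (Fin (m + 2)) ℚ).map (Ideal.Quotient.mk I) ^ (m + 2 + 1) :=
          Ideal.pow_right_mono (ker_le_map_idealOfVars I J hJX φ hφ) _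
      _ = (idealOfVars (Fin (m + 2)) ℚ ^ (m + 2 + 1)).map (Ideal.Quotient.mk I) :=
          (Ideal.map_pow _ _ _).symm
      _ ≤ I.map (Ideal.Quotient.mk I) := Ideal.map_mono <| by
          simpa [hI] using pow_idealOfVars_card_succ_le_span_X_sq (σ := Fin (m + 2)) (k := ℚ)
      _ = ⊥ := Ideal.map_quotient_self I
end

section
/- Let n ≥ 2, let s : (Fin n → ℚ) → ℚ be the linear map summing the coordinates, and let μ : Λ(Fin n → ℚ) → Λ(ℚ) be the induced ℚ-algebra homomorphism between exterior algebras (the functorial map on exterior algebras induced by s). Then (ker μ)^{n−1} ≠ 0 and (ker μ)^n = 0; that is, nil(ker μ) = n − 1. -/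
/-!
If `f` has a section `g`, then `x - map (g ∘ f) x` lies in the right ideal generated by
`ι (ker f)`, which is two-sided because `x * ι m = ι m * involute x`; hence `ker (map f)` lies in
it, and its `(d + 1)`-st power lies in `ι (ker f) ^ (d + 1) * ⊤ = 0`, where `d = dim (ker f)`.
Conversely, the wedge of a basis of `ker f` is a nonzero element of `(ker (map f)) ^ d`.
-/

open ExteriorAlgebra Module

theorem Submodule.pow_mul_top_le {R A : Type*} [CommSemiring R] [Semiring A] [Algebra R A]
    {P : Submodule R A} (hP : ⊤ * P ≤ P * ⊤) (k : ℕ) : (P * ⊤) ^ k ≤ P ^ k * ⊤ := by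
  induction k with
  | zero => simp
  | succ k ih =>
    calc (P * ⊤) ^ (k + 1) = (P * ⊤) ^ k * (P * ⊤) := pow_succ _ _
      _ ≤ P ^ k * ⊤ * (P * ⊤) := by gcongr
      _ = P ^ k * (⊤ * P) * ⊤ := by simp only [mul_assoc]
      _ ≤ P ^ k * (P * ⊤) * ⊤ := by gcongr
      _ = P ^ (k + 1) * (⊤ * ⊤) := by simp only [pow_succ, mul_assoc]
      _ ≤ P ^ (k + 1) * ⊤ := by gcongr; exact le_top

namespace ExteriorAlgebra

section CommRing

variable {R M N : Type*} [CommRing R] [AddCommGroup M] [Module R M] [AddCommGroup N] [Module R N]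

theorem mul_ι_eq_ι_mul_involute (x : ExteriorAlgebra R M) (m : M) :
    x * ι R m = ι R m * CliffordAlgebra.involute x := by
  induction x using ExteriorAlgebra.induction with
  | algebraMap r => rw [AlgHom.commutes, Algebra.commutes]
  | ι u =>
    rw [CliffordAlgebra.involute_ι, mul_neg, eq_neg_of_add_eq_zero_left (ι_add_mul_swap u m)]
  | add a b ha hb => rw [add_mul, ha, hb, map_add, mul_add]
  | mul a b ha hb => rw [mul_assoc, hb, ← mul_assoc, ha, mul_assoc, map_mul]

theorem top_mul_map_ι_le (W : Submodule R M) :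
    ⊤ * W.map (ι R) ≤ W.map (ι R) * (⊤ : Submodule R (ExteriorAlgebra R M)) := by
  refine Submodule.mul_le.2 fun x _ y ⟨w, hw, hy⟩ => ?_
  rw [← hy, mul_ι_eq_ι_mul_involute]
  exact Submodule.mul_mem_mul (Submodule.mem_map_of_mem hw) trivial

theorem top_mul_map_ι_mul_top_le (W : Submodule R M) :
    ⊤ * (W.map (ι R) * ⊤) ≤ W.map (ι R) * (⊤ : Submodule R (ExteriorAlgebra R M)) :=
  calc ⊤ * (W.map (ι R) * ⊤) = ⊤ * W.map (ι R) * ⊤ := (mul_assoc _ _ _).symm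
    _ ≤ W.map (ι R) * ⊤ * ⊤ := mul_le_mul' (top_mul_map_ι_le W) le_rfl
    _ ≤ W.map (ι R) * ⊤ := by rw [mul_assoc]; gcongr; exact le_top

theorem ιMulti_mem_pow_map_ι {W : Submodule R M} {m : ℕ} {v : Fin m → M}
    (hv : ∀ i, v i ∈ W) :
    ιMulti R m v ∈ W.map (ι R) ^ m := by
  rw [ιMulti_apply]
  exact Submodule.pow_subset_pow _
    (Set.mem_pow.2 ⟨fun i => ⟨ι R (v i), Submodule.mem_map_of_mem (hv i)⟩, rfl⟩)

theorem sub_map_comp_mem_map_ι_ker_mul_top {f : M →ₗ[R] N} {g : N →ₗ[R] M}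
    (hfg : f ∘ₗ g = LinearMap.id) (x : ExteriorAlgebra R M) :
    x - map (g ∘ₗ f) x ∈ (LinearMap.ker f).map (ι R) * ⊤ := by
  set P : Submodule R (ExteriorAlgebra R M) := (LinearMap.ker f).map (ι R)
  have mul_mem_right {a : ExteriorAlgebra R M} (b : ExteriorAlgebra R M) (ha : a ∈ P * ⊤) :
      a * b ∈ P * ⊤ := by
    have : P * ⊤ * ⊤ ≤ P * ⊤ := by rw [mul_assoc]; gcongr; exact le_top
    exact this (Submodule.mul_mem_mul ha trivial)
  have mul_mem_left (a : ExteriorAlgebra R M) {b : ExteriorAlgebra R M} (hb : b ∈ P * ⊤) :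
      a * b ∈ P * ⊤ :=
    top_mul_map_ι_mul_top_le _ (Submodule.mul_mem_mul trivial hb)
  induction x using ExteriorAlgebra.induction with
  | algebraMap r => simp
  | ι v =>
    rw [map_apply_ι, ← map_sub, ← mul_one (ι R _)]
    refine Submodule.mul_mem_mul (Submodule.mem_map_of_mem ?_) trivial
    rw [LinearMap.mem_ker, map_sub, LinearMap.comp_apply, ← LinearMap.comp_apply f g, hfg,
      LinearMap.id_apply, sub_self]
  | add a b ha hb => rw [map_add, add_sub_add_comm]; exact add_mem ha hb
  | mul a b ha hb =>
    have : a * b - map (g ∘ₗ f) (a * b) =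
        (a - map (g ∘ₗ f) a) * b + map (g ∘ₗ f) a * (b - map (g ∘ₗ f) b) := by
      rw [map_mul]; noncomm_ring
    rw [this]
    exact add_mem (mul_mem_right _ ha) (mul_mem_left _ hb)

theorem ker_map_le_map_ι_ker_mul_top {f : M →ₗ[R] N} {g : N →ₗ[R] M}
    (hfg : f ∘ₗ g = LinearMap.id) :
    LinearMap.ker (map f).toLinearMap ≤ (LinearMap.ker f).map (ι R) * ⊤ := by
  intro x hx
  have hx' : map (g ∘ₗ f) x = 0 := by
    have hx : map f x = 0 := hx
    rw [← map_comp_map, AlgHom.comp_apply, hx, map_zero]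
  simpa [hx'] using sub_map_comp_mem_map_ι_ker_mul_top hfg x

end CommRing

section Field

variable {K V N : Type*} [Field K] [AddCommGroup V] [Module K V] [AddCommGroup N] [Module K N]

theorem map_ι_pow_eq_bot_of_finrank_lt [FiniteDimensional K V] (W : Submodule K V) {m : ℕ}
    (hm : finrank K W < m) : W.map (ι K) ^ m = ⊥ := by
  have hW : W.map (ι K) = (LinearMap.range (ι K)).map (map W.subtype).toLinearMap := by
    rw [ι_range_map_map, Submodule.range_subtype]
  have hpow : LinearMap.range (ι K : W →ₗ[K] ExteriorAlgebra K W) ^ m = ⊥ :=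
    Submodule.finrank_eq_zero.1 <| by rw [exteriorPower.finrank_eq, Nat.choose_eq_zero_of_lt hm]
  rw [hW, ← Submodule.map_pow, hpow, Submodule.map_bot]

theorem ιMulti_ne_zero_of_linearIndependent {m : ℕ} {v : Fin m → V}
    (hv : LinearIndependent K v) : ιMulti K m v ≠ 0 := by
  have := (exteriorPower.ιMulti_family_linearIndependent_field (n := m) hv).ne_zero
    (Set.powersetCard.ofFinEmbEquiv (OrderIso.refl _).toOrderEmbedding)
  rw [ne_eq, ← Submodule.coe_eq_zero] at this
  simpa [exteriorPower.ιMulti_family] using this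

variable [FiniteDimensional K V] (f : V →ₗ[K] N)

theorem ker_map_pow_finrank_ker_ne_bot :
    LinearMap.ker (map f).toLinearMap ^ finrank K (LinearMap.ker f) ≠ ⊥ := by
  let b := finBasisOfFinrankEq K (LinearMap.ker f) rfl
  have hv : LinearIndependent K ((LinearMap.ker f).subtype ∘ b) :=
    b.linearIndependent.map' _ (Submodule.ker_subtype _)
  have hle : (LinearMap.ker f).map (ι K) ≤ LinearMap.ker (map f).toLinearMap := by
    rintro _ ⟨w, hw, rfl⟩
    simp [map_apply_ι, LinearMap.mem_ker.1 hw]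
  intro hbot
  apply ιMulti_ne_zero_of_linearIndependent hv
  have := pow_le_pow_left' hle _ (ιMulti_mem_pow_map_ι fun i => (b i).2)
  rwa [hbot, Submodule.mem_bot] at this

theorem ker_map_pow_finrank_ker_add_one_eq_bot {f : V →ₗ[K] N} (hf : Function.Surjective f) :
    LinearMap.ker (map f).toLinearMap ^ (finrank K (LinearMap.ker f) + 1) = ⊥ := by
  obtain ⟨g, hg⟩ := f.exists_rightInverse_of_surjective (LinearMap.range_eq_top.2 hf)
  refine le_bot_iff.1 ?_
  calc LinearMap.ker (map f).toLinearMap ^ (finrank K (LinearMap.ker f) + 1)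
      ≤ ((LinearMap.ker f).map (ι K) * ⊤) ^ (finrank K (LinearMap.ker f) + 1) :=
        pow_le_pow_left' (ker_map_le_map_ι_ker_mul_top hg) _
    _ ≤ (LinearMap.ker f).map (ι K) ^ (finrank K (LinearMap.ker f) + 1) * ⊤ :=
        Submodule.pow_mul_top_le (top_mul_map_ι_le _) _
    _ = ⊥ := by rw [map_ι_pow_eq_bot_of_finrank_lt _ (Nat.lt_succ_self _), Submodule.bot_mul]

end Field

end ExteriorAlgebra

/-- Let `s : (Fin n → ℚ) → ℚ` be the linear map summing the coordinates and
`μ = ExteriorAlgebra.map s : Λ(Fin n → ℚ) → Λ(ℚ)` the induced algebra map between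
exterior algebras. With `K` the kernel of `μ` (a two-sided ideal, viewed here as a
`ℚ`-submodule of the exterior algebra, so that its powers make sense), one has
`K^{n−1} ≠ 0` and `K^n = 0`, i.e. `nil(ker μ) = n − 1`. -/
theorem nil_ker_mul_odd_sphere (n : ℕ) (hn : 2 ≤ n)
    (s : (Fin n → ℚ) →ₗ[ℚ] ℚ) (hs : ∀ v, s v = ∑ i, v i)
    (μ : ExteriorAlgebra ℚ (Fin n → ℚ) →ₐ[ℚ] ExteriorAlgebra ℚ ℚ)
    (hμ : μ = ExteriorAlgebra.map s)
    (K : Submodule ℚ (ExteriorAlgebra ℚ (Fin n → ℚ)))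
    (hK : ∀ x : ExteriorAlgebra ℚ (Fin n → ℚ), x ∈ K ↔ μ x = 0) :
    K ^ (n - 1) ≠ ⊥ ∧ K ^ n = ⊥ := by
  have hKker : K = LinearMap.ker (map s).toLinearMap := by
    ext x
    rw [hK, hμ]
    rfl
  have hsurj : Function.Surjective s := fun y =>
    ⟨Pi.single ⟨0, by omega⟩ y, by simp [hs]⟩
  have hdim : finrank ℚ (LinearMap.ker s) = n - 1 := by
    have := s.finrank_range_add_finrank_ker
    rw [LinearMap.range_eq_top.2 hsurj, finrank_top, finrank_self, finrank_fin_fun] at this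
    omega
  subst hKker
  refine ⟨hdim ▸ ker_map_pow_finrank_ker_ne_bot s, ?_⟩
  simpa [hdim, Nat.sub_add_cancel (by omega : 1 ≤ n)] using
    ker_map_pow_finrank_ker_add_one_eq_bot hsurj
end

section
/- Let n ≥ 2 and l ≥ 1, let R be the quotient of ℚ[X_0, …, X_{n−1}] by the ideal generated by X_i^{l+1} for all i, and let φ : R → ℚ[X]/(X^{l+1}) be the ℚ-algebra homomorphism sending the class x_i of each X_i to the class of X. Then (ker φ)^{nl} ≠ 0 and (ker φ)^{nl+1} = 0; that is, nil(ker φ) = nl. -/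
/-!
Write `x_i` for the class of `X_i` and `w_i = x_i - x_0 ∈ ker φ`. Since `x_i ^ (l + 1) = 0`,
the binomial theorem gives `w_1 ^ (2l) = (-1)^l C(2l, l) x_0^l x_1^l`, and `x_0^l w_i^l = x_0^l x_i^l`.
Hence `w_1 ^ (2l) ∏_{i ≥ 2} w_i ^ l`, a product of `nl` elements of `ker φ`, is a nonzero multiple
of the top class `∏ x_i ^ l`. Conversely, evaluating at `0` shows that `ker φ` lies in the ideal
generated by the `x_i`, and a monomial of degree `nl + 1` in `n` variables has some exponent `> l`.
-/

open MvPolynomial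

namespace MvPolynomial

variable {σ R : Type*}

section CommSemiring

variable [CommSemiring R]

theorem mem_span_range_X_pow_iff {p : MvPolynomial σ R} {k : ℕ} :
    p ∈ Ideal.span (Set.range fun i => X i ^ k) ↔ ∀ x ∈ p.support, ∃ i, k ≤ x i := by
  have hgen : (Set.range fun i : σ => (X i : MvPolynomial σ R) ^ k) =
      (monomial · 1) '' Set.range fun i => Finsupp.single i k := by
    rw [← Set.range_comp]
    simp only [Function.comp_def, X_pow_eq_monomial]
  simp [hgen, mem_ideal_span_monomial_image, Finsupp.single_le_iff]

theorem prod_X_pow_notMem_span_X_pow [Fintype σ] [Nontrivial R] (l : ℕ) :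
    ∏ i, (X i : MvPolynomial σ R) ^ l ∉ Ideal.span (Set.range fun i => X i ^ (l + 1)) := by
  classical
  rw [prod_X_pow, mem_span_range_X_pow_iff, support_monomial, if_neg one_ne_zero]
  simp [Finsupp.indicator_apply]

theorem pow_idealOfVars_le_span_X_pow [Fintype σ] (l : ℕ) :
    idealOfVars σ R ^ (Fintype.card σ * l + 1) ≤
      Ideal.span (Set.range fun i => X i ^ (l + 1)) := by
  intro p hp
  rw [mem_pow_idealOfVars_iff] at hp
  rw [mem_span_range_X_pow_iff]
  intro x hx
  by_contra! hlt
  have hdeg : x.degree ≤ Fintype.card σ * l := by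
    rw [Finsupp.degree_eq_sum]
    simpa using Finset.sum_le_card_nsmul Finset.univ x l fun i _ => Nat.lt_succ_iff.mp (hlt i)
  have := hp x hx
  omega

end CommSemiring

theorem map_idealOfVars_pow_eq_bot [CommRing R] [Fintype σ] (l : ℕ) :
    (idealOfVars σ R).map (Ideal.Quotient.mk (Ideal.span (Set.range fun i => X i ^ (l + 1)))) ^
      (Fintype.card σ * l + 1) = ⊥ := by
  rw [← Ideal.map_pow, ← le_bot_iff, ← Ideal.map_quotient_self]
  exact Ideal.map_mono (pow_idealOfVars_le_span_X_pow l)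

theorem ker_le_map_idealOfVars {k : Type*} [CommRing k] {I : Ideal (MvPolynomial σ k)}
    {J : Ideal (Polynomial k)} (hJ : J ≤ Ideal.span {Polynomial.X})
    (φ : (MvPolynomial σ k ⧸ I) →ₐ[k] (Polynomial k ⧸ J))
    (hφ : ∀ i, φ (Ideal.Quotient.mk I (X i)) = Ideal.Quotient.mk J Polynomial.X) :
    RingHom.ker φ ≤ (idealOfVars σ k).map (Ideal.Quotient.mk I) := by
  intro r hr
  obtain ⟨g, rfl⟩ := Ideal.Quotient.mk_surjective r
  rw [RingHom.mem_ker] at hr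
  let χ : (Polynomial k ⧸ J) →ₐ[k] k := Ideal.Quotient.liftₐ J (Polynomial.aeval 0) fun a ha => by
    obtain ⟨c, rfl⟩ := Ideal.mem_span_singleton.mp (hJ ha)
    simp
  have hχφ : χ.comp (φ.comp (Ideal.Quotient.mkₐ k I)) = aeval 0 :=
    algHom_ext fun i => by simp [χ, hφ]
  have hg : constantCoeff g = 0 := by
    simpa [hr] using (DFunLike.congr_fun hχφ g).symm
  refine Ideal.mem_map_of_mem _ ?_
  rw [← pow_one (idealOfVars σ k), mem_pow_idealOfVars_iff']
  intro x hx
  rw [Nat.lt_one_iff, Finsupp.degree_eq_zero_iff] at hx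
  rwa [hx, ← constantCoeff_eq]

end MvPolynomial

section NilpotentPowers

variable {R : Type*}

theorem pow_mul_eq_pow_mul_of_dvd_sub [CommRing R] {a y z : R} {l : ℕ}
    (ha : a ^ (l + 1) = 0) (hyz : a ∣ y - z) : a ^ l * y = a ^ l * z := by
  obtain ⟨c, hc⟩ := hyz
  rw [← sub_eq_zero, ← mul_sub, hc, ← mul_assoc, ← pow_succ, ha, zero_mul]

theorem pow_mul_prod_sub_pow_of_pow_succ_eq_zero {ι : Type*} [CommRing R] {a : R} {l : ℕ}
    (ha : a ^ (l + 1) = 0) (s : Finset ι) (b : ι → R) :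
    a ^ l * ∏ i ∈ s, (b i - a) ^ l = a ^ l * ∏ i ∈ s, b i ^ l := by
  refine pow_mul_eq_pow_mul_of_dvd_sub ha ?_
  rw [← Ideal.mem_span_singleton, ← Ideal.Quotient.eq]
  simp [Ideal.Quotient.eq_zero_iff_mem.mpr (Ideal.mem_span_singleton_self a)]

theorem add_pow_two_mul_of_pow_succ_eq_zero [CommSemiring R] {a b : R} {l : ℕ}
    (ha : a ^ (l + 1) = 0) (hb : b ^ (l + 1) = 0) :
    (a + b) ^ (2 * l) = (2 * l).choose l * a ^ l * b ^ l := by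
  rw [add_pow, Finset.sum_eq_single l]
  · rw [two_mul, Nat.add_sub_cancel]
    ring
  · intro j _ hjl
    rcases Nat.lt_or_gt_of_ne hjl with hlt | hgt
    · rw [pow_eq_zero_of_le (by omega) hb, mul_zero, zero_mul]
    · rw [pow_eq_zero_of_le hgt ha, zero_mul, zero_mul]
  · intro h
    exact absurd (Finset.mem_range.mpr (by omega)) h

theorem sub_pow_mul_prod_sub_pow_eq [CommRing R] {m l : ℕ} {x : Fin (m + 2) → R}
    (hx : ∀ i, x i ^ (l + 1) = 0) :
    (x 1 - x 0) ^ (2 * l) * ∏ i : Fin m, (x i.succ.succ - x 0) ^ l =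
      (-1) ^ l * (2 * l).choose l * ∏ i, x i ^ l := by
  have hsq : (x 1 - x 0) ^ (2 * l) = (-1) ^ l * (2 * l).choose l * x 0 ^ l * x 1 ^ l := by
    have hx0 : (-x 0) ^ (l + 1) = 0 := by rw [neg_pow, hx, mul_zero]
    rw [sub_eq_neg_add, add_pow_two_mul_of_pow_succ_eq_zero hx0 (hx 1), neg_pow]
    ring
  calc _ = (-1) ^ l * (2 * l).choose l * x 1 ^ l *
        (x 0 ^ l * ∏ i : Fin m, (x i.succ.succ - x 0) ^ l) := by
        rw [hsq]; ring
    _ = (-1) ^ l * (2 * l).choose l * x 1 ^ l * (x 0 ^ l * ∏ i : Fin m, x i.succ.succ ^ l) := by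
        rw [pow_mul_prod_sub_pow_of_pow_succ_eq_zero (hx 0)]
    _ = _ := by
        rw [Fin.prod_univ_succ, Fin.prod_univ_succ, Fin.succ_zero_eq_one]
        ring

theorem sub_pow_mul_prod_sub_pow_mem_pow [CommRing R] {K : Ideal R} {m l : ℕ}
    {x : Fin (m + 2) → R} (hx : ∀ i, x i - x 0 ∈ K) :
    (x 1 - x 0) ^ (2 * l) * ∏ i : Fin m, (x i.succ.succ - x 0) ^ l ∈ K ^ ((m + 2) * l) := by
  have := Ideal.mul_mem_mul (Ideal.pow_mem_pow (hx 1) (2 * l))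
    (Ideal.prod_mem_prod (s := Finset.univ) fun (i : Fin m) _ =>
      Ideal.pow_mem_pow (hx i.succ.succ) l)
  rwa [Finset.prod_const, Finset.card_univ, Fintype.card_fin, ← pow_mul, ← pow_add,
    show 2 * l + l * m = (m + 2) * l by ring] at this

theorem isUnit_neg_one_pow_mul_choose [CommRing R] [Algebra ℚ R] (l : ℕ) :
    IsUnit ((-1) ^ l * (2 * l).choose l : R) := by
  refine isUnit_neg_one.pow l |>.mul ?_
  simpa using ((Nat.cast_ne_zero (R := ℚ)).mpr (Nat.choose_pos (by omega)).ne').isUnit.map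
    (algebraMap ℚ R)

end NilpotentPowers

theorem nil_ker_mul_complex_projective_general (n l : ℕ) (hn : 2 ≤ n)
    (I : Ideal (MvPolynomial (Fin n) ℚ))
    (hI : I = Ideal.span (Set.range fun i : Fin n => MvPolynomial.X i ^ (l + 1)))
    (J : Ideal (Polynomial ℚ))
    (hJ : J = Ideal.span {Polynomial.X ^ (l + 1)})
    (φ : (MvPolynomial (Fin n) ℚ ⧸ I) →ₐ[ℚ] (Polynomial ℚ ⧸ J))
    (hφ : ∀ i : Fin n,
      φ (Ideal.Quotient.mk I (MvPolynomial.X i)) = Ideal.Quotient.mk J Polynomial.X) :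
    (RingHom.ker φ) ^ (n * l) ≠ ⊥ ∧ (RingHom.ker φ) ^ (n * l + 1) = ⊥ := by
  obtain ⟨m, rfl⟩ : ∃ m, n = m + 2 := ⟨n - 2, by omega⟩
  set x : Fin (m + 2) → MvPolynomial (Fin (m + 2)) ℚ ⧸ I := fun i => Ideal.Quotient.mk I (X i)
  have hx_nil : ∀ i, x i ^ (l + 1) = 0 := fun i => by
    rw [← map_pow, Ideal.Quotient.eq_zero_iff_mem, hI]
    exact Ideal.subset_span ⟨i, rfl⟩
  have hx_ker : ∀ i, x i - x 0 ∈ RingHom.ker φ := fun i => by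
    simp [RingHom.mem_ker, x, hφ]
  refine ⟨fun hbot => ?_, ?_⟩
  · have hw := sub_pow_mul_prod_sub_pow_mem_pow (l := l) hx_ker
    rw [hbot, Ideal.mem_bot, sub_pow_mul_prod_sub_pow_eq hx_nil,
      (isUnit_neg_one_pow_mul_choose l).mul_right_eq_zero] at hw
    exact prod_X_pow_notMem_span_X_pow l <| by
      simpa [x, ← map_pow, ← map_prod, Ideal.Quotient.eq_zero_iff_mem, hI] using hw
  · have hJX : J ≤ Ideal.span {Polynomial.X} := hJ ▸
      Ideal.span_singleton_le_span_singleton.mpr (dvd_pow_self _ l.succ_ne_zero)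
    refine le_bot_iff.mp <| (Ideal.pow_right_mono (ker_le_map_idealOfVars hJX φ hφ) _).trans ?_
    subst hI
    simpa using (map_idealOfVars_pow_eq_bot (σ := Fin (m + 2)) (R := ℚ) l).le

/-- Let `R = ℚ[X_0, …, X_{n−1}] / (X_i^{l+1})` and let `φ : R → ℚ[X]/(X^{l+1})` be
the `ℚ`-algebra homomorphism sending each class `x_i` to the class of `X`. Then
`(ker φ)^{nl} ≠ 0` and `(ker φ)^{nl+1} = 0`, i.e. `nil(ker φ) = nl`. -/
theorem nil_ker_mul_complex_projective (n l : ℕ) (hn : 2 ≤ n) (hl : 1 ≤ l)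
    (I : Ideal (MvPolynomial (Fin n) ℚ))
    (hI : I = Ideal.span (Set.range fun i : Fin n => MvPolynomial.X i ^ (l + 1)))
    (J : Ideal (Polynomial ℚ))
    (hJ : J = Ideal.span {Polynomial.X ^ (l + 1)})
    (φ : (MvPolynomial (Fin n) ℚ ⧸ I) →ₐ[ℚ] (Polynomial ℚ ⧸ J))
    (hφ : ∀ i : Fin n,
      φ (Ideal.Quotient.mk I (MvPolynomial.X i)) = Ideal.Quotient.mk J Polynomial.X) :
    (RingHom.ker φ) ^ (n * l) ≠ ⊥ ∧ (RingHom.ker φ) ^ (n * l + 1) = ⊥ :=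
  nil_ker_mul_complex_projective_general n l hn I hI J hJ φ hφ
end

section
/- Let n = 2s with s ≥ 1 and l ≥ 1, and let R be the quotient of ℚ[X_0, …, X_{n−1}] by the ideal generated by X_i^{l+1} for all i, with x_i the class of X_i. Setting w_i = x_i − x_{i−1} and γ = (−1)^l · binom(2l, l), one has the identity w_1^{2l} · w_3^{2l} · ⋯ · w_{2s−1}^{2l} = γ^s · x_0^l x_1^l ⋯ x_{2s−1}^l in R, and this element is nonzero. -/
/-!
Since `x_i ^ (l + 1) = 0`, the binomial expansion of `(x_{2j+1} - x_{2j}) ^ (2l)` keeps only its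
middle term `γ x_{2j}^l x_{2j+1}^l`; the factors involve disjoint pairs of variables, so their
product is `γ^s ∏ x_i^l`. This is nonzero because a monomial lies in a monomial ideal only if it is
divisible by one of the generators, and `∏ X_i^l` is divisible by no `X_i^(l+1)`.
-/

open Finset MvPolynomial

theorem Fin.prod_univ_two_mul {M : Type*} [CommMonoid M] (s : ℕ) (f : Fin (2 * s) → M) :
    ∏ i, f i = ∏ j : Fin s, f ⟨2 * j, by omega⟩ * f ⟨2 * j + 1, by omega⟩ := by
  rw [← (finProdFinEquiv.trans (finCongr (mul_comm s 2))).prod_comp, Fintype.prod_prod_type]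
  refine prod_congr rfl fun j _ => ?_
  rw [Fin.prod_univ_two]
  congr 2 <;> ext <;> simp; ring

theorem sub_pow_two_mul_of_pow_succ_eq_zero {R A : Type*} [CommRing R] [CommRing A] [Algebra R A]
    {a b : A} {l : ℕ} (ha : a ^ (l + 1) = 0) (hb : b ^ (l + 1) = 0) :
    (a - b) ^ (2 * l) = ((-1) ^ l * (2 * l).choose l : R) • (a ^ l * b ^ l) := by
  rw [sub_pow, sum_eq_single l, Algebra.smul_def]
  · simp only [map_mul, map_pow, map_neg, map_one, map_natCast, show 2 * l - l = l by omega,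
      pow_add, pow_mul, neg_one_sq, one_pow, mul_one]
    ring
  · intro k _ hkl
    rcases hkl.lt_or_gt with hk | hk
    · rw [pow_eq_zero_of_le (by omega) hb]; simp
    · rw [pow_eq_zero_of_le hk ha]; simp
  · exact fun h => absurd (mem_range.2 (by omega)) h

theorem MvPolynomial.monomial_notMem_span_X_pow {σ R : Type*} [CommSemiring R]
    {m : σ →₀ ℕ} {c : R} (hc : c ≠ 0) {k : ℕ} (hm : ∀ i, m i ≤ k) :
    monomial m c ∉ Ideal.span (Set.range fun i => (X i : MvPolynomial σ R) ^ (k + 1)) := by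
  classical
  have hgen : (Set.range fun i => (X i : MvPolynomial σ R) ^ (k + 1)) =
      (fun m => monomial m 1) '' Set.range fun i => Finsupp.single i (k + 1) := by
    rw [← Set.range_comp]
    simp [Function.comp_def, X_pow_eq_monomial]
  rw [hgen, mem_ideal_span_monomial_image, support_monomial, if_neg hc]
  intro h
  obtain ⟨_, ⟨i, rfl⟩, hle⟩ := h m (mem_singleton_self m)
  simpa using (hle i).trans (hm i)

theorem MvPolynomial.smul_prod_mk_X_pow {σ R : Type*} [Fintype σ] [CommRing R]
    (I : Ideal (MvPolynomial σ R)) (c : R) (k : ℕ) :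
    c • ∏ i, Ideal.Quotient.mk I (X i) ^ k
      = Ideal.Quotient.mk I (monomial (∑ i, Finsupp.single i k) c) := by
  rw [monomial_sum_index, ← smul_eq_C_mul, ← Ideal.Quotient.mkₐ_eq_mk R, map_smul, map_prod]
  simp [← X_pow_eq_monomial]

/-- Let `n = 2s`, `R = ℚ[X_0, …, X_{n−1}] / (X_i^{l+1})` with classes `x_i`,
`w_i = x_i − x_{i−1}` and `γ = (−1)^l · C(2l, l)`. Then
`w_1^{2l} · w_3^{2l} ⋯ w_{2s−1}^{2l} = γ^s · x_0^l x_1^l ⋯ x_{2s−1}^l`,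
and this element is nonzero. -/
theorem complex_projective_even_product (s l : ℕ)
    (I : Ideal (MvPolynomial (Fin (2 * s)) ℚ))
    (hI : I = Ideal.span (Set.range fun i : Fin (2 * s) => MvPolynomial.X i ^ (l + 1)))
    (γ : ℚ) (hγ : γ = (-1 : ℚ) ^ l * (Nat.choose (2 * l) l : ℚ)) :
    ((∏ j : Fin s,
        (Ideal.Quotient.mk I (MvPolynomial.X ⟨2 * (j : ℕ) + 1, by have := j.isLt; omega⟩)
          - Ideal.Quotient.mk I
              (MvPolynomial.X ⟨2 * (j : ℕ), by have := j.isLt; omega⟩)) ^ (2 * l))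
      = γ ^ s • ∏ i : Fin (2 * s), (Ideal.Quotient.mk I (MvPolynomial.X i)) ^ l) ∧
    γ ^ s • ∏ i : Fin (2 * s), (Ideal.Quotient.mk I (MvPolynomial.X i)) ^ l ≠ 0 := by
  have hx : ∀ i, Ideal.Quotient.mk I (X i) ^ (l + 1) = 0 := fun i => by
    rw [← map_pow, Ideal.Quotient.eq_zero_iff_mem, hI]
    exact Ideal.subset_span ⟨i, rfl⟩
  have hγ0 : γ ≠ 0 := hγ ▸
    mul_ne_zero (pow_ne_zero _ (by norm_num)) (Nat.cast_ne_zero.2 (Nat.choose_pos (by omega)).ne')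
  constructor
  · simp_rw [sub_pow_two_mul_of_pow_succ_eq_zero (R := ℚ) (hx _) (hx _), ← hγ]
    rw [← smul_prod, card_univ, Fintype.card_fin, Fin.prod_univ_two_mul]
    exact congrArg _ (prod_congr rfl fun _ _ => mul_comm _ _)
  · rw [smul_prod_mk_X_pow, Ne, Ideal.Quotient.eq_zero_iff_mem, hI]
    exact monomial_notMem_span_X_pow (pow_ne_zero s hγ0) fun i => by simp
end
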